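/- Let d ≥ 1 and define f̄ : ℝ^d → ℝ by f̄(x) = (Γ(3 + d/2)/(2π^{d/2}))·(1 − ‖x‖²)² for ‖x‖ < 1 and f̄(x) = 0 otherwise. Then f̄ is differentiable at every point of ℝ^d, and its gradient is globally Lipschitz with constant 6·π^{−d/2}·Γ(3 + d/2): for all x, y ∈ ℝ^d, ‖∇f̄(y) − ∇f̄(x)‖ ≤ 6·π^{−d/2}·Γ(3 + d/2)·‖y − x‖. -/

import Mathlib

/-!
Write `f̄ = C · φ(1 - ‖x‖²)` with `C = Γ(3 + d/2) / (2π^{d/2})` and `φ(t) = max(t, 0)²`. Since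
`φ` is `C¹` with `φ'(t) = 2 max(t, 0)`, the chain rule gives `∇f̄(x) = -4C · g(x) • x` where
`g(x) = max(1 - ‖x‖², 0)`. The map `x ↦ g(x) • x` is `3`-Lipschitz: `g ≤ 1`, `g` is `2`-Lipschitz,
and `g` vanishes off the unit ball. Hence `∇f̄` is `12C`-Lipschitz, and `12C = 6π^{-d/2}Γ(3 + d/2)`.
-/

open MeasureTheory

noncomputable section

/-- The density `f̄(x) = (Γ(3 + d/2)/(2π^{d/2}))(1 - ‖x‖²)² 𝟙_{‖x‖ < 1}`. -/
noncomputable def fbar (d : ℕ) (x : EuclideanSpace ℝ (Fin d)) : ℝ :=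
  if ‖x‖ < 1 then
    Real.Gamma (3 + (d : ℝ) / 2) / (2 * Real.pi ^ ((d : ℝ) / 2)) * (1 - ‖x‖ ^ 2) ^ 2
  else 0

theorem hasDerivAt_max_zero_sq (t : ℝ) :
    HasDerivAt (fun s : ℝ => max s 0 ^ 2) (2 * max t 0) t := by
  refine hasDerivAt_of_hasDerivAt_of_ne' (f := fun s : ℝ => max s 0 ^ 2)
    (g := fun s => 2 * max s 0) (x := 0) (fun t ht => ?_) (by fun_prop) (by fun_prop) t
  rcases ht.lt_or_gt with ht | ht
  · rw [max_eq_right ht.le, mul_zero]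
    refine (hasDerivAt_const t (0 : ℝ)).congr_of_eventuallyEq ?_
    filter_upwards [Iio_mem_nhds ht] with s hs
    simp [max_eq_right (Set.mem_Iio.1 hs).le]
  · rw [max_eq_left ht.le]
    refine (by simpa using hasDerivAt_pow 2 t : HasDerivAt (fun s : ℝ => s ^ 2) (2 * t) t)
      |>.congr_of_eventuallyEq ?_
    filter_upwards [Ioi_mem_nhds ht] with s hs
    rw [max_eq_left (Set.mem_Ioi.1 hs).le]

theorem abs_max_one_sub_sq_sub_le {r s : ℝ} (hr : 0 ≤ r) (hs : 0 ≤ s) :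
    |max (1 - r ^ 2) 0 - max (1 - s ^ 2) 0| ≤ 2 * |r - s| := by
  have h₁ := le_abs_self (r - s)
  have h₂ := neg_abs_le (r - s)
  rw [abs_le]
  rcases le_total r 1 with hr1 | hr1 <;> rcases le_total s 1 with hs1 | hs1 <;>
  simp only [max_eq_left, max_eq_right, sub_nonneg, sub_nonpos, one_le_pow₀, pow_le_one₀, *] <;>
  constructor <;> nlinarith

theorem lipschitzWith_max_one_sub_norm_sq {E : Type*} [SeminormedAddCommGroup E] :
    LipschitzWith 2 (fun x : E => max (1 - ‖x‖ ^ 2) 0) := by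
  refine lipschitzWith_iff_norm_sub_le.2 fun x y => ?_
  calc |max (1 - ‖x‖ ^ 2) 0 - max (1 - ‖y‖ ^ 2) 0|
      ≤ 2 * |‖x‖ - ‖y‖| := abs_max_one_sub_sq_sub_le (norm_nonneg x) (norm_nonneg y)
    _ ≤ 2 * ‖x - y‖ := by gcongr; exact abs_norm_sub_norm_le x y

theorem lipschitzWith_max_one_sub_norm_sq_smul {E : Type*} [SeminormedAddCommGroup E]
    [NormedSpace ℝ E] : LipschitzWith 3 (fun x : E => max (1 - ‖x‖ ^ 2) 0 • x) := by
  refine lipschitzWith_iff_norm_sub_le.2 fun x y => ?_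
  wlog hyx : ‖y‖ ≤ ‖x‖ generalizing x y
  · rw [norm_sub_rev, norm_sub_rev x]
    exact this y x (le_of_not_ge hyx)
  set g : E → ℝ := fun z => max (1 - ‖z‖ ^ 2) 0
  have hgx : ‖g x‖ ≤ 1 := by
    rw [Real.norm_of_nonneg (le_max_right _ _)]
    exact max_le (by nlinarith [norm_nonneg x]) zero_le_one
  -- If `‖y‖ > 1`, both points lie outside the unit ball, where `g` vanishes.
  have hdiff : |g x - g y| * ‖y‖ ≤ 2 * ‖x - y‖ := by
    by_cases hy : ‖y‖ ≤ 1
    · calc |g x - g y| * ‖y‖ ≤ |g x - g y| * 1 := by gcongr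
        _ ≤ 2 * ‖x - y‖ := by
          simpa using lipschitzWith_max_one_sub_norm_sq.norm_sub_le x y
    · have hvanish : ∀ z : E, 1 ≤ ‖z‖ → g z = 0 := fun z hz =>
        max_eq_right (by nlinarith)
      rw [hvanish x (by linarith), hvanish y (by linarith)]
      simp
  calc ‖g x • x - g y • y‖ = ‖g x • (x - y) + (g x - g y) • y‖ := by
        rw [smul_sub, sub_smul]; abel_nf
    _ ≤ ‖g x‖ * ‖x - y‖ + |g x - g y| * ‖y‖ := by
        rw [← Real.norm_eq_abs, ← norm_smul, ← norm_smul]; exact norm_add_le _ _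
    _ ≤ 1 * ‖x - y‖ + 2 * ‖x - y‖ := by gcongr
    _ = 3 * ‖x - y‖ := by ring

theorem HasGradientAt.const_mul {F : Type*} [NormedAddCommGroup F] [InnerProductSpace ℝ F]
    [CompleteSpace F] {f : F → ℝ} {f' x : F} (c : ℝ) (hf : HasGradientAt f f' x) :
    HasGradientAt (fun y => c * f y) (c • f') x := by
  rw [hasGradientAt_iff_hasFDerivAt] at hf ⊢
  refine (hf.const_mul c).congr_fderiv ?_
  ext v
  simp

theorem hasGradientAt_max_one_sub_norm_sq_sq {E : Type*} [NormedAddCommGroup E]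
    [InnerProductSpace ℝ E] [CompleteSpace E] (x : E) :
    HasGradientAt (fun y : E => max (1 - ‖y‖ ^ 2) 0 ^ 2) ((-4 * max (1 - ‖x‖ ^ 2) 0) • x) x := by
  have hinner : HasFDerivAt (fun y : E => 1 - ‖y‖ ^ 2) (-(2 • innerSL ℝ x)) x := by
    simpa [sub_eq_add_neg] using ((hasStrictFDerivAt_norm_sq x).hasFDerivAt.neg).const_add 1
  rw [hasGradientAt_iff_hasFDerivAt]
  refine ((hasDerivAt_max_zero_sq _).comp_hasFDerivAt x hinner).congr_fderiv ?_
  ext v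
  simp
  ring

theorem fbar_eq (d : ℕ) : fbar d = fun x => Real.Gamma (3 + (d : ℝ) / 2) /
    (2 * Real.pi ^ ((d : ℝ) / 2)) * max (1 - ‖x‖ ^ 2) 0 ^ 2 := by
  funext x
  unfold fbar
  split_ifs with h
  · rw [max_eq_left (by nlinarith [norm_nonneg x])]
  · rw [max_eq_right (by nlinarith [norm_nonneg x]), zero_pow two_ne_zero, mul_zero]

theorem hasGradientAt_fbar (d : ℕ) (x : EuclideanSpace ℝ (Fin d)) :
    HasGradientAt (fbar d) ((-(4 * (Real.Gamma (3 + (d : ℝ) / 2) /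
      (2 * Real.pi ^ ((d : ℝ) / 2))))) • (max (1 - ‖x‖ ^ 2) 0 • x)) x := by
  rw [fbar_eq, smul_smul]
  convert (hasGradientAt_max_one_sub_norm_sq_sq x).const_mul _ using 1
  rw [smul_smul]
  ring_nf

theorem stmt11_general (d : ℕ) :
    Differentiable ℝ (fbar d) ∧
    ∀ x y : EuclideanSpace ℝ (Fin d),
      ‖gradient (fbar d) y - gradient (fbar d) x‖ ≤
        6 * Real.pi ^ (-(d : ℝ) / 2) * Real.Gamma (3 + (d : ℝ) / 2) * ‖y - x‖ := by
  refine ⟨fun x => (hasGradientAt_fbar d x).differentiableAt, fun x y => ?_⟩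
  set C := Real.Gamma (3 + (d : ℝ) / 2) / (2 * Real.pi ^ ((d : ℝ) / 2)) with hC_def
  have hconst : 6 * Real.pi ^ (-(d : ℝ) / 2) * Real.Gamma (3 + (d : ℝ) / 2) = 4 * C * 3 := by
    rw [neg_div, Real.rpow_neg Real.pi_pos.le, hC_def]
    field_simp
    ring
  rw [(hasGradientAt_fbar d x).gradient, (hasGradientAt_fbar d y).gradient, ← smul_sub,
    norm_smul, norm_neg, Real.norm_of_nonneg (by positivity), hconst, mul_assoc _ 3]
  gcongr
  exact_mod_cast lipschitzWith_max_one_sub_norm_sq_smul.norm_sub_le y x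

theorem stmt11 (d : ℕ) (hd : 1 ≤ d) :
    Differentiable ℝ (fbar d) ∧
    ∀ x y : EuclideanSpace ℝ (Fin d),
      ‖gradient (fbar d) y - gradient (fbar d) x‖ ≤
        6 * Real.pi ^ (-(d : ℝ) / 2) * Real.Gamma (3 + (d : ℝ) / 2) * ‖y - x‖ :=
  stmt11_general d
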